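/- Let (X, 𝔅, μ) be a σ-finite measure space, let E be an energy form on (X, μ) and let h ∈ D(E). The following are equivalent: (i) h is E-superharmonic: E(h, ψ) ≥ 0 for every ψ ∈ D(E) with ψ ≥ 0 μ-a.e., where E(f, g) := (E(f+g) − E(f−g))/4 is the polarized form computed from the finite real values; (ii) there exists g : X → ℝ with g ≤ h μ-a.e. such that E(h) = inf{ E(f) : f : X → ℝ with f ≥ g μ-a.e. }; (iii) E(h) = inf{ E(f) : f : X → ℝ with f ≥ h μ-a.e. }; (iv) for every f : X → ℝ, E(min(f, h)) ≤ E(f), the minimum taken pointwise. All infima are computed in [0,∞]. -/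

import Mathlib

open Filter MeasureTheory Topology
open scoped ENNReal

/-- Local convergence in `μ`-measure of a net (indexed by `ι`, along the filter `l`)
of functions `F i : X → ℝ` to `f : X → ℝ`. -/
def TendstoLocInMeasure {X : Type*} [MeasurableSpace X] (μ : Measure X)
    {ι : Type*} (l : Filter ι) (F : ι → X → ℝ) (f : X → ℝ) : Prop :=
  ∀ U : Set X, MeasurableSet U → μ U < ⊤ → ∀ ε : ℝ, 0 < ε →
    Tendsto (fun i => μ (U ∩ {x | ε ≤ |F i x - f x|})) l (𝓝 0)

/-- An energy form on `(X, μ)`: a map `E : (X → ℝ) → [0,∞]` which (1) only depends on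
`μ`-equivalence classes, (2) is a quadratic form (parallelogram identity and homogeneity),
(3) is lower semicontinuous with respect to local convergence in `μ`-measure of nets, and
(4) satisfies `E (C ∘ f) ≤ E f` for every normal contraction `C : ℝ → ℝ`. -/
def IsEnergyForm {X : Type*} [MeasurableSpace X] (μ : Measure X)
    (E : (X → ℝ) → ℝ≥0∞) : Prop :=
  (∀ f g : X → ℝ, f =ᵐ[μ] g → E f = E g) ∧
  (∀ f g : X → ℝ, 2 * E f + 2 * E g = E (f + g) + E (f - g)) ∧
  (∀ (c : ℝ) (f : X → ℝ), E (c • f) = ENNReal.ofReal (c ^ 2) * E f) ∧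
  (∀ (ι : Type*) [Preorder ι] [IsDirected ι (· ≤ ·)] [Nonempty ι]
    (F : ι → X → ℝ) (f : X → ℝ), TendstoLocInMeasure μ atTop F f →
      E f ≤ liminf (fun i => E (F i)) atTop) ∧
  (∀ C : ℝ → ℝ, C 0 = 0 → (∀ x y : ℝ, |C x - C y| ≤ |x - y|) →
    ∀ f : X → ℝ, E (C ∘ f) ≤ E f)

/-- The polarized bilinear form `E(f,g) = (E(f+g) - E(f-g))/4`, computed from the finite
real values of `E (f+g)` and `E (f-g)`. -/
noncomputable def polarForm {X : Type*} (E : (X → ℝ) → ℝ≥0∞) (f g : X → ℝ) : ℝ :=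
  ((E (f + g)).toReal - (E (f - g)).toReal) / 4

/-!
Superharmonicity of `h` is the first-order condition `E(h, ψ) ≥ 0` for minimizing `E` over
`{f ≥ h}`: since `E(h + ψ) = E(h) + 2 E(h, ψ) + E(ψ)`, it forces `E h ≤ E (h + ψ)` for `ψ ≥ 0`;
conversely minimality along `h + 2⁻ⁿ ψ` together with `E(h, 2⁻ⁿ ψ) = 2⁻ⁿ E(h, ψ)` gives
`0 ≤ 2 E(h, ψ) + 2⁻ⁿ E(ψ)` for all `n`. The lattice form (iv) follows from the submodularity
`E (f ⊓ h) + E (f ⊔ h) ≤ E f + E h`, obtained from the parallelogram identity for the pair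
`f + h`, `|h - f|` and the contraction `E |f - h| ≤ E (f - h)`.
-/

lemma eq_biInf_iff_forall_le {α β : Type*} [CompleteLattice β] (F : α → β) {p : α → Prop}
    {a : α} (ha : p a) : F a = ⨅ (x : α) (_ : p x), F x ↔ ∀ x, p x → F a ≤ F x :=
  ⟨fun h x hx => h ▸ iInf₂_le x hx, fun h => le_antisymm (le_iInf₂ h) (iInf₂_le a ha)⟩

namespace IsEnergyForm

variable {X : Type*} [MeasurableSpace X] {μ : Measure X} {E : (X → ℝ) → ℝ≥0∞}
  {f g : X → ℝ}

lemma abs_le (hE : IsEnergyForm μ E) (f : X → ℝ) : E |f| ≤ E f :=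
  hE.2.2.2.2 (fun r => |r|) abs_zero abs_abs_sub_abs_le_abs_sub f

lemma apply_two_smul (hE : IsEnergyForm μ E) (f : X → ℝ) : E ((2 : ℝ) • f) = 4 * E f := by
  rw [hE.2.2.1]
  norm_num

lemma add_ne_top (hE : IsEnergyForm μ E) (hf : E f ≠ ⊤) (hg : E g ≠ ⊤) : E (f + g) ≠ ⊤ := by
  have hsum : E (f + g) + E (f - g) ≠ ⊤ := by
    rw [← hE.2.1]
    finiteness
  exact (ENNReal.add_ne_top.mp hsum).1

lemma sub_ne_top (hE : IsEnergyForm μ E) (hf : E f ≠ ⊤) (hg : E g ≠ ⊤) : E (f - g) ≠ ⊤ := by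
  have hsum : E (f + g) + E (f - g) ≠ ⊤ := by
    rw [← hE.2.1]
    finiteness
  exact (ENNReal.add_ne_top.mp hsum).2

lemma smul_ne_top (hE : IsEnergyForm μ E) (c : ℝ) (hf : E f ≠ ⊤) : E (c • f) ≠ ⊤ := by
  rw [hE.2.2.1]
  finiteness

lemma toReal_parallelogram (hE : IsEnergyForm μ E) (hf : E f ≠ ⊤) (hg : E g ≠ ⊤) :
    (E (f + g)).toReal + (E (f - g)).toReal = 2 * (E f).toReal + 2 * (E g).toReal := by
  have h := congrArg ENNReal.toReal (hE.2.1 f g)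
  rwa [ENNReal.toReal_add (by finiteness) (by finiteness),
    ENNReal.toReal_add (hE.add_ne_top hf hg) (hE.sub_ne_top hf hg), ENNReal.toReal_mul,
    ENNReal.toReal_mul, ENNReal.toReal_ofNat, eq_comm] at h

lemma toReal_apply_add (hE : IsEnergyForm μ E) (hf : E f ≠ ⊤) (hg : E g ≠ ⊤) :
    (E (f + g)).toReal = (E f).toReal + 2 * polarForm E f g + (E g).toReal := by
  have := hE.toReal_parallelogram hf hg
  unfold polarForm
  linarith

lemma polarForm_two_smul (hE : IsEnergyForm μ E) (hf : E f ≠ ⊤) (hg : E g ≠ ⊤) :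
    polarForm E f ((2 : ℝ) • g) = 2 * polarForm E f g := by
  have hplus := hE.toReal_parallelogram (hE.add_ne_top hf hg) hg
  have hminus := hE.toReal_parallelogram (hE.sub_ne_top hf hg) hg
  rw [add_sub_cancel_right, add_assoc, ← two_smul ℝ g] at hplus
  rw [sub_add_cancel, sub_sub, ← two_smul ℝ g] at hminus
  unfold polarForm
  linarith

lemma polarForm_inv_two_pow_smul (hE : IsEnergyForm μ E) (hf : E f ≠ ⊤) (hg : E g ≠ ⊤)
    (n : ℕ) : polarForm E f (((2 : ℝ)⁻¹) ^ n • g) = (2 : ℝ)⁻¹ ^ n * polarForm E f g := by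
  induction n with
  | zero => simp
  | succ n ih =>
    have hdouble := hE.polarForm_two_smul hf (hE.smul_ne_top ((2 : ℝ)⁻¹ ^ (n + 1)) hg)
    rw [smul_smul, show (2 : ℝ) * 2⁻¹ ^ (n + 1) = 2⁻¹ ^ n by ring, ih] at hdouble
    linear_combination -hdouble / 2

lemma le_add_of_polarForm_nonneg (hE : IsEnergyForm μ E) (hf : E f ≠ ⊤) (hg : E g ≠ ⊤)
    (hfg : 0 ≤ polarForm E f g) : E f ≤ E (f + g) := by
  rw [← ENNReal.toReal_le_toReal hf (hE.add_ne_top hf hg), hE.toReal_apply_add hf hg]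
  linarith [ENNReal.toReal_nonneg (a := E g)]

lemma polarForm_nonneg_of_le_add_smul (hE : IsEnergyForm μ E) (hf : E f ≠ ⊤) (hg : E g ≠ ⊤)
    (hmin : ∀ t : ℝ, 0 < t → E f ≤ E (f + t • g)) : 0 ≤ polarForm E f g := by
  have hbound : ∀ n : ℕ, -((2 : ℝ)⁻¹ ^ n * (E g).toReal) ≤ 2 * polarForm E f g := by
    intro n
    have ht : (0 : ℝ) < 2⁻¹ ^ n := by positivity
    have hle := (ENNReal.toReal_le_toReal hf (hE.add_ne_top hf (hE.smul_ne_top _ hg))).mpr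
      (hmin _ ht)
    rw [hE.toReal_apply_add hf (hE.smul_ne_top _ hg), hE.polarForm_inv_two_pow_smul hf hg,
      hE.2.2.1, ENNReal.toReal_mul, ENNReal.toReal_ofReal (sq_nonneg _)] at hle
    have hprod : 0 ≤ 2⁻¹ ^ n * (2 * polarForm E f g + 2⁻¹ ^ n * (E g).toReal) := by
      linear_combination hle
    linarith [(mul_nonneg_iff_of_pos_left ht).mp hprod]
  have hlim : Tendsto (fun n : ℕ => -((2 : ℝ)⁻¹ ^ n * (E g).toReal)) atTop (𝓝 0) := by
    simpa using ((tendsto_pow_atTop_nhds_zero_of_lt_one (r := (2 : ℝ)⁻¹) (by norm_num)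
      (by norm_num)).mul_const
      (E g).toReal).neg
  linarith [le_of_tendsto' hlim hbound]

lemma inf_add_sup_le (hE : IsEnergyForm μ E) (f g : X → ℝ) :
    E (f ⊓ g) + E (f ⊔ g) ≤ E f + E g := by
  have hsub : E (g - f) ≤ E (f - g) := by
    rw [← neg_sub, ← neg_one_smul ℝ (f - g), hE.2.2.1]
    norm_num
  have h4 : (4 : ℝ≥0∞) * (E (f ⊓ g) + E (f ⊔ g)) ≤ 4 * (E f + E g) :=
    calc 4 * (E (f ⊓ g) + E (f ⊔ g))
        = E ((2 : ℝ) • (f ⊔ g)) + E ((2 : ℝ) • (f ⊓ g)) := by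
          rw [hE.apply_two_smul, hE.apply_two_smul]; ring
      _ = E (f + g + |g - f|) + E (f + g - |g - f|) := by
          rw [two_smul, two_smul, ← two_nsmul, ← two_nsmul, two_nsmul_sup_eq_add_add_abs_sub,
            two_nsmul_inf_eq_add_sub_abs_sub]
      _ = 2 * E (f + g) + 2 * E |g - f| := (hE.2.1 _ _).symm
      _ ≤ 2 * E (f + g) + 2 * E (f - g) := by gcongr; exact (hE.abs_le _).trans hsub
      _ = 4 * (E f + E g) := by rw [← mul_add, ← hE.2.1]; ring
  exact (ENNReal.mul_le_mul_iff_right (by norm_num) (by norm_num)).mp h4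

end IsEnergyForm

theorem stmt_15_general {X : Type*} [MeasurableSpace X] (μ : Measure X)
    (E : (X → ℝ) → ℝ≥0∞) (hE : IsEnergyForm μ E) (h : X → ℝ) (hh : E h < ⊤) :
    List.TFAE
      [∀ ψ : X → ℝ, E ψ < ⊤ → (∀ᵐ x ∂μ, 0 ≤ ψ x) → 0 ≤ polarForm E h ψ,
        ∃ g : X → ℝ, (∀ᵐ x ∂μ, g x ≤ h x) ∧
          E h = ⨅ (f : X → ℝ) (_ : ∀ᵐ x ∂μ, g x ≤ f x), E f,
        E h = ⨅ (f : X → ℝ) (_ : ∀ᵐ x ∂μ, h x ≤ f x), E f,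
        ∀ f : X → ℝ, E (fun x => min (f x) (h x)) ≤ E f] := by
  have hmin_iff := eq_biInf_iff_forall_le E (p := fun f => ∀ᵐ x ∂μ, h x ≤ f x)
    (ae_of_all _ fun _ => le_rfl)
  tfae_have 1 → 3 := by
    refine fun hsuper => hmin_iff.mpr fun f hf => ?_
    rcases eq_or_ne (E f) ⊤ with hf_top | hf_top
    · exact hf_top ▸ le_top
    have hψ : E (f - h) ≠ ⊤ := hE.sub_ne_top hf_top hh.ne
    have hψ_nonneg : ∀ᵐ x ∂μ, 0 ≤ (f - h) x := hf.mono fun x hx => sub_nonneg.mpr hx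
    simpa using hE.le_add_of_polarForm_nonneg hh.ne hψ (hsuper _ hψ.lt_top hψ_nonneg)
  tfae_have 3 → 2 := fun h3 => ⟨h, ae_of_all _ fun _ => le_rfl, h3⟩
  tfae_have 2 → 1 := by
    rintro ⟨g, hgh, hmin⟩ ψ hψ hψ_nonneg
    rw [eq_biInf_iff_forall_le E hgh] at hmin
    refine hE.polarForm_nonneg_of_le_add_smul hh.ne hψ.ne fun t ht => hmin _ ?_
    filter_upwards [hgh, hψ_nonneg] with x hgx hψx
    simpa using hgx.trans (le_add_of_nonneg_right (mul_nonneg ht.le hψx))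
  tfae_have 3 → 4 := by
    refine fun h3 f => (ENNReal.add_le_add_iff_right hh.ne).mp ?_
    calc E (f ⊓ h) + E h ≤ E (f ⊓ h) + E (f ⊔ h) :=
          add_le_add_right (hmin_iff.mp h3 _ (ae_of_all _ fun x => le_max_right _ _)) _
      _ ≤ E f + E h := hE.inf_add_sup_le f h
  tfae_have 4 → 3 := fun h4 => hmin_iff.mpr fun f hf =>
    (hE.1 _ _ (hf.mono fun x hx => (min_eq_right hx).symm)).trans_le (h4 f)
  tfae_finish

/-- characterization of superharmonic functions as minimizers of the
energy. -/
theorem stmt_15 {X : Type*} [MeasurableSpace X] (μ : Measure X) [SigmaFinite μ]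
    (E : (X → ℝ) → ℝ≥0∞) (hE : IsEnergyForm μ E) (h : X → ℝ) (hh : E h < ⊤) :
    List.TFAE
      [∀ ψ : X → ℝ, E ψ < ⊤ → (∀ᵐ x ∂μ, 0 ≤ ψ x) → 0 ≤ polarForm E h ψ,
        ∃ g : X → ℝ, (∀ᵐ x ∂μ, g x ≤ h x) ∧
          E h = ⨅ (f : X → ℝ) (_ : ∀ᵐ x ∂μ, g x ≤ f x), E f,
        E h = ⨅ (f : X → ℝ) (_ : ∀ᵐ x ∂μ, h x ≤ f x), E f,
        ∀ f : X → ℝ, E (fun x => min (f x) (h x)) ≤ E f] :=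
  stmt_15_general μ E hE h hh
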